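/- arXiv:2503.05538 — 4 statements merged into one kernel-verified Lean document; each statement's English description precedes it below -/
import Mathlib

section
/- Let X ∈ ℝ^{n×p} have full column rank, P symmetric positive semi-definite, λ > 0, ν ∈ (0,1], and β^PLS := (XᵀX + λP)⁻¹Xᵀy. The penalized boosting iterates β^[k] = [∑_{m=0}^{k-1} ν(I - ν(XᵀX+λP)⁻¹XᵀX)^m]·β^PLS converge to the unpenalized solution (XᵀX)⁻¹Xᵀy as k → ∞. -/
/-!
With `M = XᵀX`, `A = XᵀX + λP` and `B = I - ν A⁻¹M`, the sum `∑_{m<k} ν Bᵐ` telescopes to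
`M⁻¹A (I - Bᵏ)`, so the `k`-th iterate is `M⁻¹Xᵀy - M⁻¹A Bᵏ β^PLS` and it suffices that
`Bᵏ → 0`. The square root `R = M^{1/2}` conjugates `B` to the symmetric matrix
`I - ν R A⁻¹ R`. An eigenvalue `μ` of `R A⁻¹ R` satisfies `0 < μ ≤ 1` because `M ≤ A`, so the
eigenvalues of the conjugate lie in `[1 - ν, 1) ⊆ (-1, 1)` for `0 < ν < 2`.
-/

open Matrix Filter Topology

theorem tendsto_pow_nhds_zero_of_semiconjBy {R : Type*} [MonoidWithZero R] [TopologicalSpace R]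
    [ContinuousMul R] {a : Rˣ} {x y : R} (h : SemiconjBy (a : R) x y)
    (hy : Tendsto (fun k : ℕ => y ^ k) atTop (𝓝 0)) :
    Tendsto (fun k : ℕ => x ^ k) atTop (𝓝 0) := by
  have hx (k : ℕ) : x ^ k = ↑a⁻¹ * (y ^ k * a) := by
    rw [← (h.pow_right k).eq, Units.inv_mul_cancel_left]
  simpa [hx] using (hy.mul_const (a : R)).const_mul (↑a⁻¹ : R)

theorem Matrix.mulVec_injective_of_rank_eq_card {K m ι : Type*} [Field K] [Fintype m] [Fintype ι]
    {X : Matrix m ι K} (h : X.rank = Fintype.card ι) : Function.Injective X.mulVec := by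
  have hnull := X.mulVecLin.finrank_range_add_finrank_ker
  rw [← Matrix.rank, h, Module.finrank_fintype_fun_eq_card] at hnull
  have hker : LinearMap.ker X.mulVecLin = ⊥ := Submodule.finrank_eq_zero.1 (by omega)
  exact LinearMap.ker_eq_bot.1 hker

theorem Matrix.IsHermitian.tendsto_pow_nhds_zero {𝕜 ι : Type*} [RCLike 𝕜] [Fintype ι]
    [DecidableEq ι] {H : Matrix ι ι 𝕜} (hH : H.IsHermitian) (h : ∀ i, |hH.eigenvalues i| < 1) :
    Tendsto (fun k : ℕ => H ^ k) atTop (𝓝 0) := by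
  set U : Matrix ι ι 𝕜 := (hH.eigenvectorUnitary : Matrix ι ι 𝕜)
  have hpow (k : ℕ) :
      H ^ k = U * diagonal (fun i => (hH.eigenvalues i : 𝕜) ^ k) * star U := by
    conv_lhs => rw [hH.spectral_theorem]
    rw [← map_pow, diagonal_pow, Unitary.conjStarAlgAut_apply]
    rfl
  have hdiag : Tendsto (fun k : ℕ => diagonal (fun i => (hH.eigenvalues i : 𝕜) ^ k))
      atTop (𝓝 (diagonal 0)) := by
    refine (continuous_id.matrix_diagonal.tendsto _).comp (tendsto_pi_nhds.2 fun i => ?_)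
    simpa [Function.comp_def] using (RCLike.continuous_ofReal (K := 𝕜)).continuousAt.tendsto.comp
      (tendsto_pow_atTop_nhds_zero_of_abs_lt_one (h i))
  have hconj : Continuous fun D : Matrix ι ι 𝕜 => U * D * star U := by fun_prop
  simpa [hpow, Function.comp_def] using (hconj.tendsto _).comp hdiag

theorem Matrix.mem_Ioc_of_mul_inv_mul_mulVec_eq_smul {ι : Type*} [Fintype ι] [DecidableEq ι]
    {A R : Matrix ι ι ℝ} (hA : A.PosDef) (hR : IsUnit R) (hRsymm : Rᵀ = R)
    (hle : (A - R * R).PosSemidef) {v : ι → ℝ} (hv : v ≠ 0) {μ : ℝ}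
    (h : (R * A⁻¹ * R) *ᵥ v = μ • v) : μ ∈ Set.Ioc 0 1 := by
  -- For `u = A⁻¹ R v`, both `uᵀ A u = μ |v|²` and `uᵀ R² u = μ² |v|²`.
  set u := A⁻¹ *ᵥ (R *ᵥ v)
  have hAu : A *ᵥ u = R *ᵥ v := by
    rw [mulVec_mulVec, mul_nonsing_inv _ ((isUnit_iff_isUnit_det A).1 hA.isUnit), one_mulVec]
  have hRu : R *ᵥ u = μ • v := by rw [← h, mulVec_mulVec, mulVec_mulVec, mul_assoc]
  have hu : u ≠ 0 := fun hu0 => hv <| mulVec_injective_iff_isUnit.2 hR <| by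
    rw [← hAu, hu0, mulVec_zero, mulVec_zero]
  have hvecR : u ᵥ* R = R *ᵥ u := by rw [← hRsymm, vecMul_transpose, hRsymm]
  have hquadA : u ⬝ᵥ (A *ᵥ u) = μ * (v ⬝ᵥ v) := by
    rw [hAu, dotProduct_mulVec, hvecR, hRu, smul_dotProduct, smul_eq_mul]
  have hquadM : u ⬝ᵥ ((R * R) *ᵥ u) = μ ^ 2 * (v ⬝ᵥ v) := by
    rw [← mulVec_mulVec, dotProduct_mulVec, hvecR, hRu, smul_dotProduct, dotProduct_smul]
    simp only [smul_eq_mul]; ring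
  have hposA : 0 < u ⬝ᵥ (A *ᵥ u) := by simpa using hA.dotProduct_mulVec_pos hu
  have hMleA : u ⬝ᵥ ((R * R) *ᵥ u) ≤ u ⬝ᵥ (A *ᵥ u) := by
    have := hle.dotProduct_mulVec_nonneg u
    rw [star_trivial, sub_mulVec, dotProduct_sub] at this
    linarith
  have hvv : 0 ≤ v ⬝ᵥ v := by simpa using dotProduct_star_self_nonneg v
  have hμ : 0 < μ := by nlinarith
  exact ⟨hμ, by nlinarith⟩

open scoped MatrixOrder in
theorem Matrix.tendsto_pow_one_sub_smul_inv_mul {ι : Type*} [Fintype ι] [DecidableEq ι]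
    {A M : Matrix ι ι ℝ} (hM : M.PosDef) (hMA : (A - M).PosSemidef) {ν : ℝ} (hν0 : 0 < ν)
    (hν2 : ν < 2) : Tendsto (fun k : ℕ => (1 - ν • (A⁻¹ * M)) ^ k) atTop (𝓝 0) := by
  have hA : A.PosDef := by simpa using hM.add_posSemidef hMA
  set R := CFC.sqrt M
  have hRsymm : Rᵀ = R := by
    rw [← conjTranspose_eq_transpose_of_trivial]
    exact (nonneg_iff_posSemidef.1 (CFC.sqrt_nonneg M)).isHermitian
  have hRR : R * R = M := CFC.sqrt_mul_sqrt_self M hM.posSemidef.nonneg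
  have hR : IsUnit R :=
    CFC.isUnit_sqrt_iff_isStrictlyPositive.2 (isStrictlyPositive_iff_posDef.2 hM)
  set T := R * A⁻¹ * R
  have hH : (1 - ν • T).IsHermitian := by
    have hT : T.IsHermitian := by
      simpa [conjTranspose_eq_transpose_of_trivial, hRsymm] using
        isHermitian_conjTranspose_mul_mul R hA.isHermitian.inv
    exact isHermitian_one.sub (hT.smul (IsSelfAdjoint.all ν))
  have hsemi : SemiconjBy R (1 - ν • (A⁻¹ * M)) (1 - ν • T) := by
    simp only [SemiconjBy, mul_sub, sub_mul, mul_one, one_mul, Matrix.mul_smul, smul_mul, T,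
      ← hRR, mul_assoc]
  have heig (i : ι) : |hH.eigenvalues i| < 1 := by
    set c := hH.eigenvalues i
    set v : ι → ℝ := ⇑(hH.eigenvectorBasis i)
    have hv : v ≠ 0 := fun hv0 =>
      hH.eigenvectorBasis.orthonormal.ne_zero i (by ext j; exact congrFun hv0 j)
    have hTv : T *ᵥ v = ((1 - c) / ν) • v := by
      have := hH.mulVec_eigenvectorBasis i
      rw [sub_mulVec, one_mulVec, smul_mulVec] at this
      have hνT : ν • (T *ᵥ v) = (1 - c) • v := by rw [sub_smul, one_smul, ← this, sub_sub_cancel]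
      rw [div_eq_inv_mul, mul_smul, ← hνT, smul_smul, inv_mul_cancel₀ hν0.ne', one_smul]
    obtain ⟨hμ0, hμ1⟩ := mem_Ioc_of_mul_inv_mul_mulVec_eq_smul hA hR hRsymm (by rwa [hRR]) hv hTv
    rw [lt_div_iff₀ hν0, zero_mul] at hμ0
    rw [div_le_iff₀ hν0, one_mul] at hμ1
    rw [abs_lt]
    constructor <;> linarith
  exact tendsto_pow_nhds_zero_of_semiconjBy (a := hR.unit) hsemi (hH.tendsto_pow_nhds_zero heig)

theorem Matrix.sum_range_smul_pow_one_sub_smul_inv_mul {K ι : Type*} [CommRing K] [Fintype ι]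
    [DecidableEq ι] {A M : Matrix ι ι K} (hA : IsUnit A.det) (hM : IsUnit M.det) (ν : K) (k : ℕ) :
    ∑ m ∈ Finset.range k, ν • (1 - ν • (A⁻¹ * M)) ^ m =
      M⁻¹ * A * (1 - (1 - ν • (A⁻¹ * M)) ^ k) := by
  have hcancel : M⁻¹ * A * (1 - (1 - ν • (A⁻¹ * M))) = ν • 1 := by
    rw [sub_sub_cancel, Matrix.mul_smul, mul_assoc, mul_nonsing_inv_cancel_left _ _ hA,
      nonsing_inv_mul _ hM]
  rw [← mul_neg_geom_sum, ← mul_assoc, hcancel, smul_one_mul, Finset.smul_sum]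

theorem stmt_5 {n p : ℕ} (X : Matrix (Fin n) (Fin p) ℝ) (y : Fin n → ℝ)
    (P : Matrix (Fin p) (Fin p) ℝ) (hP : P.PosSemidef)
    (lam ν : ℝ) (hlam : 0 < lam) (hν : ν ∈ Set.Ioc (0:ℝ) 1)
    (hrank : X.rank = p)
    (βPLS : Fin p → ℝ) (hPLS : βPLS = (Xᵀ * X + lam • P)⁻¹ *ᵥ (Xᵀ *ᵥ y)) :
    Tendsto
      (fun k : ℕ =>
        (∑ m ∈ Finset.range k,
            ν • (1 - ν • ((Xᵀ * X + lam • P)⁻¹ * (Xᵀ * X))) ^ m) *ᵥ βPLS)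
      atTop (nhds ((Xᵀ * X)⁻¹ *ᵥ (Xᵀ *ᵥ y))) := by
  set M := Xᵀ * X
  set A := M + lam • P
  have hM : M.PosDef := by
    simpa [conjTranspose_eq_transpose_of_trivial] using
      PosDef.conjTranspose_mul_self X (mulVec_injective_of_rank_eq_card (by simpa using hrank))
  have hMA : (A - M).PosSemidef := by simpa [A] using hP.smul hlam.le
  have hA : IsUnit A.det := (isUnit_iff_isUnit_det A).1 (hM.add_posSemidef (hP.smul hlam.le)).isUnit
  have hB := tendsto_pow_one_sub_smul_inv_mul hM hMA hν.1 (by linarith [hν.2])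
  have hlim := ((continuous_id.matrix_mulVec (continuous_const (y := βPLS))).tendsto _).comp
    ((hB.const_sub 1).const_mul (M⁻¹ * A))
  convert hlim using 2 with k
  · simp [sum_range_smul_pow_one_sub_smul_inv_mul hA ((isUnit_iff_isUnit_det M).1 hM.isUnit)]
  · rw [sub_zero, mul_one, id_eq, hPLS, mulVec_mulVec _ (M⁻¹ * A), mul_assoc,
      mul_nonsing_inv _ hA, mul_one]
end

section
/- Suppose XᵀX = σ²I for some σ² > 0. Then the L2-boosting iterate β^[k] = (1-(1-ν)^k)(XᵀX)⁻¹Xᵀy equals the ridge regression solution (XᵀX + λ̃(k)I)⁻¹Xᵀy with penalty λ̃(k) = σ²(1-ν)^k/(1-(1-ν)^k), for every k ≥ 1 and ν ∈ (0,1). -/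
open Matrix

theorem Matrix.inv_smul_one {ι K : Type*} [Fintype ι] [DecidableEq ι] [Field K] (c : K) :
    (c • (1 : Matrix ι ι K))⁻¹ = c⁻¹ • 1 := by
  rcases eq_or_ne c 0 with rfl | hc
  · simp
  · apply inv_eq_right_inv
    rw [smul_mul_smul_comm, mul_inv_cancel₀ hc, mul_one, one_smul]

/-- For an isotropic Gram matrix `A = σ • 1`, shrinking the least-squares solution by `1 - t` is
ridge regression with penalty `σ t / (1 - t)`: both are `(1 - t) / σ` times `b`. -/
theorem one_sub_smul_inv_mulVec_eq_ridge {ι K : Type*} [Fintype ι] [DecidableEq ι] [Field K]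
    {A : Matrix ι ι K} {σ : K} (hA : A = σ • 1) {t : K} (ht : t ≠ 1) (b : ι → K) :
    (1 - t) • (A⁻¹ *ᵥ b) = (A + (σ * t / (1 - t)) • 1)⁻¹ *ᵥ b := by
  have h1t : 1 - t ≠ 0 := sub_ne_zero.mpr ht.symm
  have hpenalized : σ + σ * t / (1 - t) = σ / (1 - t) := by
    field_simp
    ring
  rw [hA, ← add_smul, hpenalized, inv_smul_one, inv_smul_one, smul_mulVec, smul_mulVec, smul_smul,
    inv_div, div_eq_mul_inv]

theorem stmt_8_general {n p : ℕ} (X : Matrix (Fin n) (Fin p) ℝ) (y : Fin n → ℝ)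
    (σsq : ℝ) (hiso : Xᵀ * X = σsq • (1 : Matrix (Fin p) (Fin p) ℝ))
    (ν : ℝ) (hν : ν ∈ Set.Ioo (0:ℝ) 1) :
    ∀ k : ℕ, 1 ≤ k →
      (1 - (1 - ν) ^ k) • ((Xᵀ * X)⁻¹ *ᵥ (Xᵀ *ᵥ y)) =
        (Xᵀ * X + (σsq * (1 - ν) ^ k / (1 - (1 - ν) ^ k)) •
            (1 : Matrix (Fin p) (Fin p) ℝ))⁻¹ *ᵥ (Xᵀ *ᵥ y) := by
  intro k hk
  obtain ⟨hν0, hν1⟩ := hν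
  have hshrink : (1 - ν) ^ k ≠ 1 := (pow_lt_one₀ (by linarith) (by linarith) (by omega)).ne
  exact one_sub_smul_inv_mulVec_eq_ridge hiso hshrink _

theorem stmt_8 {n p : ℕ} (X : Matrix (Fin n) (Fin p) ℝ) (y : Fin n → ℝ)
    (σsq : ℝ) (hσ : 0 < σsq) (hiso : Xᵀ * X = σsq • (1 : Matrix (Fin p) (Fin p) ℝ))
    (ν : ℝ) (hν : ν ∈ Set.Ioo (0:ℝ) 1) :
    ∀ k : ℕ, 1 ≤ k →
      (1 - (1 - ν) ^ k) • ((Xᵀ * X)⁻¹ *ᵥ (Xᵀ *ᵥ y)) =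
        (Xᵀ * X + (σsq * (1 - ν) ^ k / (1 - (1 - ν) ^ k)) •
            (1 : Matrix (Fin p) (Fin p) ℝ))⁻¹ *ᵥ (Xᵀ *ᵥ y) :=
  stmt_8_general X y σsq hiso ν hν
end

section
/- If for every k ≥ 1 the L2-boosting iterate β^[k] = (1-(1-ν)^k)(XᵀX)⁻¹Xᵀy coincides with a ridge regression solution (XᵀX + λ̃I)⁻¹Xᵀy for some λ̃ > 0 (depending on k) and arbitrary response y, then XᵀX = σ²I for some σ² > 0. -/
/-!
The single boosting step `k = 1` already forces isotropy. Since `XᵀX` is invertible, `Xᵀ` is onto,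
so the identity `ν (XᵀX)⁻¹ Xᵀy = (XᵀX + λI)⁻¹ Xᵀy` for all `y` is an identity of matrices
`(XᵀX + λI)⁻¹ = ν (XᵀX)⁻¹`. Inverting gives `XᵀX + λI = ν⁻¹ XᵀX`, i.e. `XᵀX = νλ/(1-ν) I`.
-/

open Matrix

namespace Matrix

variable {ι K : Type*} [Fintype ι] [DecidableEq ι] [Field K]

theorem isUnit_of_rank_eq_card {A : Matrix ι ι K} (h : A.rank = Fintype.card ι) : IsUnit A := by
  refine mulVec_surjective_iff_isUnit.mp fun z => ?_
  have hrange : LinearMap.range A.mulVecLin = ⊤ :=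
    Submodule.eq_top_of_finrank_eq (by rw [← rank, h, Module.finrank_fintype_fun_eq_card])
  exact LinearMap.range_eq_top.mp hrange z

theorem eq_smul_one_of_inv_add_smul_one_eq_smul_inv {A : Matrix ι ι K} (hA : IsUnit A)
    {c lam : K} (hc0 : c ≠ 0) (hc1 : c ≠ 1) (h : (A + lam • 1)⁻¹ = c • A⁻¹) :
    A = (c * lam / (1 - c)) • 1 := by
  have hAdet : IsUnit A.det := (isUnit_iff_isUnit_det A).mp hA
  have hinv : (c⁻¹ • A)⁻¹ = c • A⁻¹ :=
    inv_eq_left_inv <| by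
      rw [smul_mul_smul_comm, mul_inv_cancel₀ hc0, nonsing_inv_mul A hAdet, one_smul]
  have hdet : IsUnit (c⁻¹ • A).det := by
    rw [det_smul]; exact ((inv_ne_zero hc0).isUnit.pow _).mul hAdet
  have hshift : c⁻¹ • A = A + lam • 1 := inv_inj (hinv.trans h.symm) hdet
  have h1c : 1 - c ≠ 0 := sub_ne_zero.mpr (Ne.symm hc1)
  have hscaled : (1 - c) • A = (c * lam) • 1 := by
    have hcA := congrArg (c • ·) hshift
    simp only [smul_smul, mul_inv_cancel₀ hc0, one_smul, smul_add] at hcA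
    rw [sub_smul, one_smul, sub_eq_iff_eq_add']; exact hcA
  calc A = (1 - c)⁻¹ • ((1 - c) • A) := by rw [smul_smul, inv_mul_cancel₀ h1c, one_smul]
    _ = (c * lam / (1 - c)) • 1 := by rw [hscaled, smul_smul, div_eq_inv_mul]

theorem mulVec_surjective_of_isUnit_mul {m n R : Type*} [Fintype m] [Fintype n] [DecidableEq m]
    [CommRing R] {A : Matrix m n R} {B : Matrix n m R} (h : IsUnit (A * B)) :
    Function.Surjective A.mulVec := fun z =>
  let ⟨v, hv⟩ := mulVec_surjective_iff_isUnit.mpr h z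
  ⟨B *ᵥ v, by rw [mulVec_mulVec, hv]⟩

end Matrix

theorem stmt_9 {n p : ℕ} (X : Matrix (Fin n) (Fin p) ℝ)
    (hrank : X.rank = p) (ν : ℝ) (hν : ν ∈ Set.Ioo (0:ℝ) 1)
    (hmatch : ∀ k : ℕ, 1 ≤ k → ∃ lam : ℝ, 0 < lam ∧
      ∀ y : Fin n → ℝ,
        (1 - (1 - ν) ^ k) • ((Xᵀ * X)⁻¹ *ᵥ (Xᵀ *ᵥ y)) =
          (Xᵀ * X + lam • (1 : Matrix (Fin p) (Fin p) ℝ))⁻¹ *ᵥ (Xᵀ *ᵥ y)) :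
    ∃ σsq : ℝ, 0 < σsq ∧ Xᵀ * X = σsq • (1 : Matrix (Fin p) (Fin p) ℝ) := by
  obtain ⟨hν0, hν1⟩ := hν
  have hA : IsUnit (Xᵀ * X) :=
    isUnit_of_rank_eq_card (by rw [rank_transpose_mul_self, hrank, Fintype.card_fin])
  obtain ⟨lam, hlam, hridge⟩ := hmatch 1 le_rfl
  have hinv : (Xᵀ * X + lam • 1)⁻¹ = ν • (Xᵀ * X)⁻¹ := by
    refine ext_iff_mulVec.mpr fun z => ?_
    obtain ⟨y, rfl⟩ := mulVec_surjective_of_isUnit_mul hA z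
    rw [← hridge y, smul_mulVec, pow_one, sub_sub_cancel]
  exact ⟨_, div_pos (mul_pos hν0 hlam) (sub_pos.mpr hν1),
    eq_smul_one_of_inv_add_smul_one_eq_smul_inv hA hν0.ne' hν1.ne hinv⟩
end

section
/- The function g : ℝ → ℝ, g(ξ) = ξ + r²·exp(-2ξ)/2 for fixed r ≠ 0, is convex but not L-smooth: its second derivative 2r²exp(-2ξ) is unbounded as ξ → -∞, so no L > 0 satisfies |g'(ξ) - g'(ξ̃)| ≤ L|ξ - ξ̃| for all ξ, ξ̃. -/
/-!
With `σ = exp ξ`, the Gaussian negative log-likelihood of an observation `r` is, up to a constant,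
`log σ + r² / (2σ²) = ξ + r² exp(-2ξ) / 2`. Its second derivative `2 r² exp(-2ξ)` is positive,
which gives convexity, and takes every positive value when `r ≠ 0`, so it is unbounded. An
`L`-Lipschitz derivative would force the second derivative to be bounded by `L`.
-/

open Real Set

theorem abs_deriv_le_of_abs_sub_le {f : ℝ → ℝ} {L : ℝ} (hL : 0 ≤ L)
    (hf : ∀ x y, |f x - f y| ≤ L * |x - y|) (x : ℝ) : |deriv f x| ≤ L :=
  norm_deriv_le_of_lip' (f := f) hL (Filter.Eventually.of_forall fun y => hf y x)

theorem not_bddAbove_range_mul_exp_mul {c k : ℝ} (hc : 0 < c) (hk : k ≠ 0) :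
    ¬ BddAbove (range fun x => c * exp (k * x)) := by
  rintro ⟨M, hM⟩
  have hpos : 0 < (|M| + 1) / c := by positivity
  have hval : c * exp (k * (log ((|M| + 1) / c) / k)) = |M| + 1 := by
    rw [mul_div_cancel₀ _ hk, exp_log hpos, mul_div_cancel₀ _ hc.ne']
  have := hM ⟨log ((|M| + 1) / c) / k, hval⟩
  linarith [le_abs_self M]

section GaussianScale

variable (r : ℝ)

noncomputable def gaussianScaleNLL (ξ : ℝ) : ℝ := ξ + r ^ 2 * exp (-2 * ξ) / 2

theorem hasDerivAt_exp_neg_two_mul (ξ : ℝ) :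
    HasDerivAt (fun ξ => exp (-2 * ξ)) (-2 * exp (-2 * ξ)) ξ := by
  simpa [mul_comm] using ((hasDerivAt_id ξ).const_mul (-2)).exp

theorem hasDerivAt_gaussianScaleNLL (ξ : ℝ) :
    HasDerivAt (gaussianScaleNLL r) (1 - r ^ 2 * exp (-2 * ξ)) ξ :=
  ((hasDerivAt_id' ξ).add (((hasDerivAt_exp_neg_two_mul ξ).const_mul (r ^ 2)).div_const 2))
    |>.congr_deriv (by ring)

theorem deriv_gaussianScaleNLL :
    deriv (gaussianScaleNLL r) = fun ξ => 1 - r ^ 2 * exp (-2 * ξ) :=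
  funext fun ξ => (hasDerivAt_gaussianScaleNLL r ξ).deriv

theorem hasDerivAt_deriv_gaussianScaleNLL (ξ : ℝ) :
    HasDerivAt (deriv (gaussianScaleNLL r)) (2 * r ^ 2 * exp (-2 * ξ)) ξ := by
  rw [deriv_gaussianScaleNLL]
  exact ((hasDerivAt_const ξ 1).sub ((hasDerivAt_exp_neg_two_mul ξ).const_mul (r ^ 2)))
    |>.congr_deriv (by ring)

theorem deriv_deriv_gaussianScaleNLL :
    deriv (deriv (gaussianScaleNLL r)) = fun ξ => 2 * r ^ 2 * exp (-2 * ξ) :=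
  funext fun ξ => (hasDerivAt_deriv_gaussianScaleNLL r ξ).deriv

theorem convexOn_gaussianScaleNLL : ConvexOn ℝ univ (gaussianScaleNLL r) :=
  convexOn_univ_of_deriv2_nonneg (fun ξ => (hasDerivAt_gaussianScaleNLL r ξ).differentiableAt)
    (fun ξ => (hasDerivAt_deriv_gaussianScaleNLL r ξ).differentiableAt)
    (fun ξ => by simp only [Function.iterate_succ_apply, Function.iterate_zero_apply,
      deriv_deriv_gaussianScaleNLL]; positivity)

end GaussianScale

theorem not_bddAbove_range_deriv_deriv_gaussianScaleNLL {r : ℝ} (hr : r ≠ 0) :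
    ¬ BddAbove (range (deriv (deriv (gaussianScaleNLL r)))) := by
  rw [deriv_deriv_gaussianScaleNLL]
  exact not_bddAbove_range_mul_exp_mul (by positivity) (by norm_num)

theorem stmt_19 (r : ℝ) (hr : r ≠ 0)
    (g : ℝ → ℝ) (hg : ∀ ξ, g ξ = ξ + r ^ 2 * Real.exp (-2 * ξ) / 2) :
    ConvexOn ℝ Set.univ g ∧
    (∀ ξ, deriv (deriv g) ξ = 2 * r ^ 2 * Real.exp (-2 * ξ)) ∧
    (¬ BddAbove (Set.range fun ξ => deriv (deriv g) ξ)) ∧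
    ∀ L : ℝ, 0 < L → ¬ ∀ ξ ξ' : ℝ, |deriv g ξ - deriv g ξ'| ≤ L * |ξ - ξ'| := by
  obtain rfl : g = gaussianScaleNLL r := funext hg
  have hunbdd := not_bddAbove_range_deriv_deriv_gaussianScaleNLL hr
  refine ⟨convexOn_gaussianScaleNLL r, congrFun (deriv_deriv_gaussianScaleNLL r), hunbdd, ?_⟩
  intro L hL hlip
  exact hunbdd ⟨L, forall_mem_range.2 fun ξ =>
    (le_abs_self _).trans (abs_deriv_le_of_abs_sub_le hL.le hlip ξ)⟩
end
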